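/- Let E be a Banach lattice, Y a Banach space, and T : E → Y a bounded operator. If T(D) is a limited set for every countable disjoint normalized subset D of E₊, then T(D) is limited for every disjoint bounded subset D of E. -/

import Mathlib

open Filter Topology Bornology

noncomputable section

/-- A set in a Banach lattice is disjoint if its elements are pairwise disjoint. -/
def DisjointSet {E : Type*} [NormedAddCommGroup E] [Lattice E] [IsOrderedAddMonoid E]
    [HasSolidNorm E] (D : Set E) : Prop :=
  ∀ x ∈ D, ∀ y ∈ D, x ≠ y → |x| ⊓ |y| = 0

/-- A sequence `f` in the dual of `Y` is weak*-null. -/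
def WStarNull {Y : Type*} [NormedAddCommGroup Y] [NormedSpace ℝ Y]
    (f : ℕ → StrongDual ℝ Y) : Prop :=
  ∀ y : Y, Tendsto (fun n => f n y) atTop (𝓝 0)

/-- The sequence `f` of functionals tends to `0` uniformly on `A`. -/
def UnifNull {Y : Type*} [NormedAddCommGroup Y] [NormedSpace ℝ Y]
    (f : ℕ → StrongDual ℝ Y) (A : Set Y) : Prop :=
  ∀ ε : ℝ, 0 < ε → ∃ N : ℕ, ∀ n ≥ N, ∀ y ∈ A, |f n y| ≤ ε

/-- A limited subset of a Banach space. -/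
def LimitedSet {Y : Type*} [NormedAddCommGroup Y] [NormedSpace ℝ Y] (A : Set Y) : Prop :=
  IsBounded A ∧ ∀ f : ℕ → StrongDual ℝ Y, WStarNull f → UnifNull f A

section Aux
variable {E : Type*} [NormedAddCommGroup E] [Lattice E] [IsOrderedAddMonoid E] [HasSolidNorm E]
  [NormedSpace ℝ E]

omit [NormedSpace ℝ E] in
lemma my_inf_add_le {a b c : E} (ha : 0 ≤ a) (hb : 0 ≤ b) (hc : 0 ≤ c) :
    (a + c) ⊓ b ≤ a ⊓ b + c ⊓ b := by
  set d := (a + c) ⊓ b with hd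
  have h1 : d - a ⊓ b = (d - a) ⊔ (d - b) := sub_inf a b d
  have hda : d - a ≤ c ⊓ b := by
    refine le_inf (sub_le_iff_le_add'.mpr inf_le_left) ?_
    exact sub_le_iff_le_add'.mpr (le_trans inf_le_right (le_add_of_nonneg_left ha))
  have hdb : d - b ≤ c ⊓ b :=
    le_inf (le_trans (sub_nonpos.mpr inf_le_right) hc)
      (le_trans (sub_nonpos.mpr inf_le_right) hb)
  have h2 : d - a ⊓ b ≤ c ⊓ b := by rw [h1]; exact sup_le hda hdb
  calc d = (d - a ⊓ b) + a ⊓ b := by abel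
    _ ≤ c ⊓ b + a ⊓ b := add_le_add_left h2 _
    _ = a ⊓ b + c ⊓ b := by abel

omit [NormedSpace ℝ E] in
lemma my_nsmul_inf {a b : E} (ha : 0 ≤ a) (hb : 0 ≤ b) (hab : a ⊓ b = 0) :
    ∀ n : ℕ, (n • a) ⊓ b = 0 := by
  intro n
  induction n with
  | zero => simpa using inf_eq_left.mpr hb
  | succ k ih =>
      have h := my_inf_add_le (nsmul_nonneg ha k) hb ha
      rw [ih, hab, add_zero] at h
      have : (k • a + a) ⊓ b = 0 :=
        le_antisymm h (le_inf (add_nonneg (nsmul_nonneg ha k) ha) hb)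
      simpa [succ_nsmul] using this

omit [NormedSpace ℝ E] in
lemma my_nsmul_inf₂ {a b : E} (ha : 0 ≤ a) (hb : 0 ≤ b) (hab : a ⊓ b = 0) (n m : ℕ) :
    (n • a) ⊓ (m • b) = 0 := by
  have h1 : (n • a) ⊓ b = 0 := my_nsmul_inf ha hb hab n
  have := my_nsmul_inf hb (nsmul_nonneg ha n) (by rw [inf_comm]; exact h1) m
  rw [inf_comm] at this; exact this

omit [NormedSpace ℝ E] in
lemma my_nonneg_of_nsmul {y : E} {n : ℕ} (hn : 0 < n) (h : 0 ≤ n • y) : 0 ≤ y := by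
  have hdec : n • y = n • y⁺ - n • y⁻ := by
    conv_lhs => rw [← posPart_sub_negPart y]
    exact nsmul_sub _ _ _
  have hle : n • y⁻ ≤ n • y⁺ := by
    rw [hdec] at h; exact sub_nonneg.mp h
  have hz : (n • y⁺) ⊓ (n • y⁻) = 0 :=
    my_nsmul_inf₂ (posPart_nonneg y) (negPart_nonneg y)
      (posPart_inf_negPart_eq_zero y) n n
  have hnz : n • y⁻ = 0 := le_antisymm (by rw [← hz]; exact le_inf hle le_rfl)
    (nsmul_nonneg (negPart_nonneg y) n)
  have hyn : y⁻ ≤ n • y⁻ := by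
    obtain ⟨k, rfl⟩ := Nat.exists_eq_succ_of_ne_zero hn.ne'
    rw [succ_nsmul]
    exact le_add_of_nonneg_left (nsmul_nonneg (negPart_nonneg y) k)
  have hneg : y⁻ = 0 := le_antisymm (hyn.trans_eq hnz) (negPart_nonneg y)
  have hps := posPart_sub_negPart y
  rw [hneg, sub_zero] at hps
  rw [← hps]; exact posPart_nonneg y

lemma my_smul_nonneg {x : E} (hx : 0 ≤ x) : ∀ {c : ℝ}, 0 ≤ c → 0 ≤ c • x := by
  have hrat : ∀ q : ℚ, 0 ≤ q → 0 ≤ (q : ℝ) • x := by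
    intro q hq
    have hden : 0 < q.den := q.den_pos
    have hnum : 0 ≤ q.num := Rat.num_nonneg.mpr hq
    have key : q.den • ((q : ℝ) • x) = q.num.toNat • x := by
      rw [← Nat.cast_smul_eq_nsmul ℝ, ← Nat.cast_smul_eq_nsmul ℝ, smul_smul]
      congr 1
      have h2 : ((q.num.toNat : ℕ) : ℝ) = (q.num : ℝ) := by
        exact_mod_cast congrArg (fun z : ℤ => (z : ℝ)) (Int.toNat_of_nonneg hnum)
      rw [h2, Rat.cast_def]
      field_simp
    exact my_nonneg_of_nsmul hden (key ▸ nsmul_nonneg hx _)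
  intro c hc
  have hseq : ∀ k : ℕ, ∃ q : ℚ, c < (q : ℝ) ∧ (q : ℝ) < c + 1 / (k + 1) := by
    intro k
    have hpos : (0:ℝ) < 1 / ((k:ℝ) + 1) := by positivity
    exact exists_rat_btwn (by linarith)
  choose q hq1 hq2 using hseq
  have hqn : ∀ k, 0 ≤ q k := fun k => by
    have := (hq1 k); exact_mod_cast (hc.trans_lt this).le
  have htend : Tendsto (fun k => ((q k : ℝ))) atTop (𝓝 c) := by
    have h1 : Tendsto (fun k : ℕ => c + 1 / ((k : ℝ) + 1)) atTop (𝓝 c) := by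
      have := tendsto_one_div_add_atTop_nhds_zero_nat (𝕜 := ℝ)
      simpa using tendsto_const_nhds.add this
    exact tendsto_of_tendsto_of_tendsto_of_le_of_le tendsto_const_nhds h1
      (fun k => (hq1 k).le) (fun k => (hq2 k).le)
  have hsm : Tendsto (fun k => ((q k : ℝ)) • x) atTop (𝓝 (c • x)) :=
    htend.smul_const x
  exact le_of_tendsto_of_tendsto' tendsto_const_nhds hsm fun k => hrat (q k) (hqn k)

lemma my_smul_inf₂ {p q : E} (hp : 0 ≤ p) (hq : 0 ≤ q) (hpq : p ⊓ q = 0)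
    {c d : ℝ} (hc : 0 ≤ c) (hd : 0 ≤ d) : (c • p) ⊓ (d • q) = 0 := by
  have hcp : c • p ≤ ⌈c⌉₊ • p := by
    have : 0 ≤ ((⌈c⌉₊ : ℝ) - c) • p := my_smul_nonneg hp (sub_nonneg.mpr (Nat.le_ceil c))
    rw [sub_smul, Nat.cast_smul_eq_nsmul] at this
    exact sub_nonneg.mp this
  have hdq : d • q ≤ ⌈d⌉₊ • q := by
    have : 0 ≤ ((⌈d⌉₊ : ℝ) - d) • q := my_smul_nonneg hq (sub_nonneg.mpr (Nat.le_ceil d))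
    rw [sub_smul, Nat.cast_smul_eq_nsmul] at this
    exact sub_nonneg.mp this
  refine le_antisymm ?_ (le_inf (my_smul_nonneg hp hc) (my_smul_nonneg hq hd))
  calc (c • p) ⊓ (d • q) ≤ (⌈c⌉₊ • p) ⊓ (⌈d⌉₊ • q) := inf_le_inf hcp hdq
    _ = 0 := my_nsmul_inf₂ hp hq hpq _ _

omit [NormedSpace ℝ E] in
lemma my_posPart_le_abs (x : E) : x⁺ ≤ |x| := by
  rw [← posPart_add_negPart x]
  exact le_add_of_nonneg_right (negPart_nonneg x)

omit [NormedSpace ℝ E] in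
lemma my_negPart_le_abs (x : E) : x⁻ ≤ |x| := by
  rw [← posPart_add_negPart x]
  exact le_add_of_nonneg_left (posPart_nonneg x)

omit [NormedSpace ℝ E] in
lemma my_norm_le_of_part {x r : E} (hr : 0 ≤ r) (hle : r ≤ |x|) : ‖r‖ ≤ ‖x‖ := by
  refine HasSolidNorm.solid ?_
  rw [abs_of_nonneg hr]
  simpa using hle

end Aux

/-- If `T` maps every countable disjoint normalized subset of the positive cone onto a
limited set, then `T` maps every disjoint bounded subset of `E` onto a limited set. -/
theorem dLimited_of_countable_pos_normalized {E Y : Type*}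
    [NormedAddCommGroup E] [Lattice E] [IsOrderedAddMonoid E] [HasSolidNorm E] [NormedSpace ℝ E] [CompleteSpace E]
    [NormedAddCommGroup Y] [NormedSpace ℝ Y] [CompleteSpace Y]
    (T : E →L[ℝ] Y)
    (h : ∀ D : Set E, D.Countable → D ⊆ {x | 0 ≤ x} → DisjointSet D →
      (∀ x ∈ D, ‖x‖ = 1) → LimitedSet (T '' D)) :
    ∀ D : Set E, DisjointSet D → IsBounded D → LimitedSet (T '' D) := by
  intro D hdisj hbdd
  obtain ⟨C, hC⟩ := isBounded_iff_forall_norm_le.mp hbdd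
  set M : ℝ := max C 1 with hMdef
  have hM1 : (1:ℝ) ≤ M := le_max_right _ _
  have hM0 : (0:ℝ) < M := lt_of_lt_of_le one_pos hM1
  have hMx : ∀ x ∈ D, ‖x‖ ≤ M := fun x hx => (hC x hx).trans (le_max_left _ _)
  constructor
  · rw [isBounded_iff_forall_norm_le]
    refine ⟨‖T‖ * M, ?_⟩
    rintro y ⟨x, hx, rfl⟩
    exact (T.le_opNorm x).trans (mul_le_mul_of_nonneg_left (hMx x hx) (norm_nonneg T))
  · intro f hf
    by_contra hcon
    unfold UnifNull at hcon
    push_neg at hcon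
    obtain ⟨ε, hε, hcon⟩ := hcon
    have hwit : ∀ N : ℕ, ∃ n ≥ N, ∃ x ∈ D, ε < |f n (T x)| := by
      intro N
      obtain ⟨n, hn, y, hy, hby⟩ := hcon N
      obtain ⟨x, hx, rfl⟩ := hy
      exact ⟨n, hn, x, hx, hby⟩
    choose n hn x hx hbig using hwit
    set p : ℕ → E := fun k => (x k)⁺ with hpdef
    set m : ℕ → E := fun k => (x k)⁻ with hmdef
    set u : ℕ → E := fun k => ‖p k‖⁻¹ • p k with hudef
    set v : ℕ → E := fun k => ‖m k‖⁻¹ • m k with hvdef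
    set D' : Set E := {w | ∃ k, (p k ≠ 0 ∧ w = u k) ∨ (m k ≠ 0 ∧ w = v k)} with hD'def
    -- each element of D' is a nonneg multiple of a part of some x k
    have hrep : ∀ w ∈ D', ∃ k, ∃ r : E, 0 ≤ r ∧ r ≠ 0 ∧ r ≤ |x k| ∧ w = ‖r‖⁻¹ • r := by
      rintro w ⟨k, hk | hk⟩
      · exact ⟨k, p k, posPart_nonneg _, hk.1, my_posPart_le_abs _, hk.2⟩
      · exact ⟨k, m k, negPart_nonneg _, hk.1, my_negPart_le_abs _, hk.2⟩
    have hcnt : D'.Countable := by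
      refine Set.Countable.mono ?_ ((Set.countable_range u).union (Set.countable_range v))
      rintro w ⟨k, hk | hk⟩
      · exact Or.inl ⟨k, hk.2.symm⟩
      · exact Or.inr ⟨k, hk.2.symm⟩
    have hpos : D' ⊆ {z | 0 ≤ z} := by
      intro w hw
      obtain ⟨k, r, hr0, hrne, hrle, rfl⟩ := hrep w hw
      exact my_smul_nonneg hr0 (inv_nonneg.mpr (norm_nonneg r))
    have hnorm1 : ∀ w ∈ D', ‖w‖ = 1 := by
      intro w hw
      obtain ⟨k, r, hr0, hrne, hrle, rfl⟩ := hrep w hw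
      rw [norm_smul, norm_inv, norm_norm]
      exact inv_mul_cancel₀ (norm_ne_zero_iff.mpr hrne)
    -- disjointness of D'
    have partdisj : ∀ {k l : ℕ} {r s : E}, x k ≠ x l → 0 ≤ r → 0 ≤ s →
        r ≤ |x k| → s ≤ |x l| → r ⊓ s = 0 := by
      intro k l r s hxy hr0 hs0 hrle hsle
      have h0 := hdisj (x k) (hx k) (x l) (hx l) hxy
      refine le_antisymm ?_ (le_inf hr0 hs0)
      calc r ⊓ s ≤ |x k| ⊓ |x l| := inf_le_inf hrle hsle
        _ = 0 := h0
    have final : ∀ {r s : E}, 0 ≤ r → 0 ≤ s → r ⊓ s = 0 →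
        |(‖r‖⁻¹ • r)| ⊓ |(‖s‖⁻¹ • s)| = 0 := by
      intro r s hr hs hrs
      rw [abs_of_nonneg (my_smul_nonneg hr (inv_nonneg.mpr (norm_nonneg r))),
        abs_of_nonneg (my_smul_nonneg hs (inv_nonneg.mpr (norm_nonneg s)))]
      exact my_smul_inf₂ hr hs hrs (inv_nonneg.mpr (norm_nonneg r))
        (inv_nonneg.mpr (norm_nonneg s))
    have hD'disj : DisjointSet D' := by
      intro a ha b hb hab
      obtain ⟨k, hk⟩ := ha
      obtain ⟨l, hl⟩ := hb
      rcases hk with ⟨hne, hae⟩ | ⟨hne, hae⟩ <;> rcases hl with ⟨hne', hbe⟩ | ⟨hne', hbe⟩ <;>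
        subst hae <;> subst hbe
      · by_cases hxy : x k = x l
        · exact absurd (by simp only [hudef, hpdef, hxy]) hab
        · exact final (posPart_nonneg _) (posPart_nonneg _)
            (partdisj hxy (posPart_nonneg _) (posPart_nonneg _)
              (my_posPart_le_abs _) (my_posPart_le_abs _))
      · by_cases hxy : x k = x l
        · refine final (posPart_nonneg _) (negPart_nonneg _) ?_
          show (x k)⁺ ⊓ (x l)⁻ = 0
          rw [hxy]; exact posPart_inf_negPart_eq_zero (x l)
        · exact final (posPart_nonneg _) (negPart_nonneg _)
            (partdisj hxy (posPart_nonneg _) (negPart_nonneg _)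
              (my_posPart_le_abs _) (my_negPart_le_abs _))
      · by_cases hxy : x k = x l
        · refine final (negPart_nonneg _) (posPart_nonneg _) ?_
          show (x k)⁻ ⊓ (x l)⁺ = 0
          rw [hxy, inf_comm]; exact posPart_inf_negPart_eq_zero (x l)
        · exact final (negPart_nonneg _) (posPart_nonneg _)
            (partdisj hxy (negPart_nonneg _) (posPart_nonneg _)
              (my_negPart_le_abs _) (my_posPart_le_abs _))
      · by_cases hxy : x k = x l
        · exact absurd (by simp only [hvdef, hmdef, hxy]) hab
        · exact final (negPart_nonneg _) (negPart_nonneg _)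
            (partdisj hxy (negPart_nonneg _) (negPart_nonneg _)
              (my_negPart_le_abs _) (my_negPart_le_abs _))
    -- apply the hypothesis to D'
    obtain ⟨-, hunif⟩ := h D' hcnt hpos hD'disj hnorm1
    obtain ⟨N₀, hN₀⟩ := hunif f hf (ε / (2 * M)) (by positivity)
    -- bound |f (n N₀) (T r)| for r a part of x N₀
    have hpart : ∀ r : E, 0 ≤ r → r ≤ |x N₀| →
        (r = 0 ∨ ‖r‖⁻¹ • r ∈ D' → True) → True := fun _ _ _ _ => trivial
    have hbound : ∀ r : E, 0 ≤ r → r ≤ |x N₀| → (r ≠ 0 → ‖r‖⁻¹ • r ∈ D') →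
        |f (n N₀) (T r)| ≤ M * (ε / (2 * M)) := by
      intro r hr0 hrle hmem
      by_cases hr : r = 0
      · subst hr
        simp only [map_zero, abs_zero]
        positivity
      · have hrne : ‖r‖ ≠ 0 := norm_ne_zero_iff.mpr hr
        have hr' : r = ‖r‖ • (‖r‖⁻¹ • r) := by
          rw [smul_smul, mul_inv_cancel₀ hrne, one_smul]
        have hval : f (n N₀) (T r) = ‖r‖ * f (n N₀) (T (‖r‖⁻¹ • r)) := by
          conv_lhs => rw [hr']
          rw [map_smul, map_smul]
          rfl
        rw [hval, abs_mul, abs_of_nonneg (norm_nonneg r)]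
        have h1 : |f (n N₀) (T (‖r‖⁻¹ • r))| ≤ ε / (2 * M) :=
          hN₀ (n N₀) (hn N₀) _ ⟨‖r‖⁻¹ • r, hmem hr, rfl⟩
        have h2 : ‖r‖ ≤ M := (my_norm_le_of_part hr0 hrle).trans (hMx _ (hx N₀))
        have h3 : (0:ℝ) ≤ ε / (2 * M) := by positivity
        calc ‖r‖ * |f (n N₀) (T (‖r‖⁻¹ • r))| ≤ ‖r‖ * (ε / (2 * M)) :=
              mul_le_mul_of_nonneg_left h1 (norm_nonneg r)
          _ ≤ M * (ε / (2 * M)) := mul_le_mul_of_nonneg_right h2 h3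
    have hbp : |f (n N₀) (T (p N₀))| ≤ M * (ε / (2 * M)) :=
      hbound (p N₀) (posPart_nonneg _) (my_posPart_le_abs _)
        (fun hne => ⟨N₀, Or.inl ⟨hne, rfl⟩⟩)
    have hbm : |f (n N₀) (T (m N₀))| ≤ M * (ε / (2 * M)) :=
      hbound (m N₀) (negPart_nonneg _) (my_negPart_le_abs _)
        (fun hne => ⟨N₀, Or.inr ⟨hne, rfl⟩⟩)
    have hxdec : x N₀ = p N₀ - m N₀ := (posPart_sub_negPart (x N₀)).symm
    have hsplit : f (n N₀) (T (x N₀)) = f (n N₀) (T (p N₀)) - f (n N₀) (T (m N₀)) := by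
      rw [hxdec, map_sub, map_sub]
    have habs : |f (n N₀) (T (x N₀))| ≤ M * (ε / (2 * M)) + M * (ε / (2 * M)) := by
      rw [hsplit]
      exact (abs_sub _ _).trans (add_le_add hbp hbm)
    have hMM : M * (ε / (2 * M)) + M * (ε / (2 * M)) = ε := by
      field_simp
      ring
    rw [hMM] at habs
    exact absurd habs (not_le.mpr (hbig N₀))
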